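/- arXiv:1807.00887 — 4 statements merged into one kernel-verified Lean document; each statement's English description precedes it below -/
import Mathlib

section
/- Let V be a finite dimensional real vector space, and let V1, V2 ⊆ V be subspaces with V1 + V2 = V and V2 of codimension 1 in V. Let Ṽ2 ⊆ V2 be an arbitrary subspace, let A : V1 → V1 and α : V2 → V be linear maps, and define the subspaces W1 = {(u1, A(u1) + w̃) : u1 ∈ V1, w̃ ∈ Ṽ2} ⊆ V × V, W2 = {(u2, v2 + α(u2)) : u2, v2 ∈ V2} ⊆ V × V, and 𝒜 = {A(w) − α(w) : w ∈ V1 ∩ V2} ⊆ V. Then W1 + W2 = V × V if and only if 𝒜 is not contained in V2. -/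
/-!
Modulo the line `V ⧸ V2`, the second coordinate of `(u1, A u1 + w) + (u2, v2 + α u2)` is the class
of `A u1 + α u2`. When the first coordinate `u1 + u2` vanishes, `u1 ∈ V1 ∩ V2` and this class is
that of `A u1 - α u1 ∈ 𝒜`; so if `𝒜 ⊆ V2`, no `(0, e)` with `e ∉ V2` is reached. Conversely, if
`A w - α w ∉ V2` for some `w ∈ V1 ∩ V2`, shifting `(u1, u2)` to `(u1 + t w, u2 - t w)` keeps the
first coordinate and moves that class by `t` times a generator of `V ⧸ V2`.
-/

namespace Submodule

variable {K V : Type*} [Field K] [AddCommGroup V] [Module K V] {p : Submodule K V}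

theorem exists_sub_smul_mem_of_finrank_quotient_eq_one (hp : Module.finrank K (V ⧸ p) = 1)
    {x : V} (hx : x ∉ p) (c : V) : ∃ t : K, c - t • x ∈ p := by
  have hx0 : p.mkQ x ≠ 0 := by simpa using hx
  obtain ⟨t, ht⟩ := (finrank_eq_one_iff_of_nonzero' _ hx0).1 hp (p.mkQ c)
  refine ⟨t, (Quotient.mk_eq_zero p).1 ?_⟩
  simpa [Quotient.mk_sub, sub_eq_zero] using ht.symm

theorem exists_notMem_of_finrank_quotient_eq_one (hp : Module.finrank K (V ⧸ p) = 1) :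
    ∃ e : V, e ∉ p :=
  SetLike.exists_not_mem_of_ne_top p <| Quotient.nontrivial_iff.1 <|
    Module.nontrivial_of_finrank_eq_succ hp

end Submodule

theorem apply_add_mem_of_coe_add_eq_zero {R V : Type*} [Ring R] [AddCommGroup V] [Module R V]
    {V1 V2 : Submodule R V} {A : V1 →ₗ[R] V1} {α : V2 →ₗ[R] V}
    (h𝒜 : ∀ w (h1 : w ∈ V1) (h2 : w ∈ V2), (A ⟨w, h1⟩ : V) - α ⟨w, h2⟩ ∈ V2)
    {u1 : V1} {u2 : V2} (h : (u1 : V) + u2 = 0) : (A u1 : V) + α u2 ∈ V2 := by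
  have hu1 : (u1 : V) ∈ V2 := by
    rw [eq_neg_of_add_eq_zero_left h]
    exact neg_mem u2.2
  have hu2 : u2 = -⟨u1, hu1⟩ := Subtype.ext (eq_neg_of_add_eq_zero_right h)
  simpa [hu2, sub_eq_add_neg] using h𝒜 u1 u1.2 hu1

theorem exists_decomposition_of_apply_sub_notMem {K V : Type*} [Field K] [AddCommGroup V]
    [Module K V] {V1 V2 : Submodule K V} (hsum : V1 ⊔ V2 = ⊤)
    (hcodim : Module.finrank K (V ⧸ V2) = 1) {A : V1 →ₗ[K] V1} {α : V2 →ₗ[K] V}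
    {w : V} (h1 : w ∈ V1) (h2 : w ∈ V2) (hw : (A ⟨w, h1⟩ : V) - α ⟨w, h2⟩ ∉ V2) (z : V × V) :
    ∃ (u1 : V1) (u2 v2 : V2), z = ((u1 : V) + u2, (A u1 : V) + (v2 + α u2)) := by
  obtain ⟨a1, ha1, a2, ha2, hz1⟩ :=
    Submodule.mem_sup.1 (hsum ▸ Submodule.mem_top : z.1 ∈ V1 ⊔ V2)
  obtain ⟨t, ht⟩ := Submodule.exists_sub_smul_mem_of_finrank_quotient_eq_one hcodim hw
    (z.2 - A ⟨a1, ha1⟩ - α ⟨a2, ha2⟩)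
  refine ⟨⟨a1, ha1⟩ + t • ⟨w, h1⟩, ⟨a2, ha2⟩ - t • ⟨w, h2⟩, ⟨_, ht⟩, Prod.ext ?_ ?_⟩
  · simp [← hz1]
  · simp only [map_add, map_sub, map_smul, Submodule.coe_add, Submodule.coe_smul]
    module

theorem sum_eq_top_iff_not_subset_general
    {V : Type*} [AddCommGroup V] [Module ℝ V]
    (V1 V2 Vt : Submodule ℝ V)
    (hsum : V1 ⊔ V2 = ⊤)
    (hcodim : Module.finrank ℝ (V ⧸ V2) = 1)
    (hVt : Vt ≤ V2)
    (A : V1 →ₗ[ℝ] V1) (α : V2 →ₗ[ℝ] V)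
    (W1 W2 : Set (V × V)) (𝒜 : Set V)
    (hW1 : W1 = {p | ∃ u1 : V1, ∃ w ∈ Vt, p = ((u1 : V), (A u1 : V) + w)})
    (hW2 : W2 = {p | ∃ u2 v2 : V2, p = ((u2 : V), (v2 : V) + α u2)})
    (h𝒜 : 𝒜 = {x | ∃ (w : V) (h1 : w ∈ V1) (h2 : w ∈ V2),
      x = (A ⟨w, h1⟩ : V) - α ⟨w, h2⟩}) :
    (∀ z : V × V, ∃ w1 ∈ W1, ∃ w2 ∈ W2, z = w1 + w2) ↔ ¬ (𝒜 ⊆ (V2 : Set V)) := by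
  subst hW1 hW2 h𝒜
  constructor
  · intro hall hsub
    obtain ⟨e, he⟩ := Submodule.exists_notMem_of_finrank_quotient_eq_one hcodim
    obtain ⟨_, ⟨u1, w, hw, rfl⟩, _, ⟨u2, v2, rfl⟩, hz⟩ := hall (0, e)
    obtain ⟨hfst, hsnd⟩ := Prod.mk.inj (hz.trans (Prod.mk_add_mk _ _ _ _))
    have hA : (A u1 : V) + α u2 ∈ V2 :=
      apply_add_mem_of_coe_add_eq_zero (fun w h1 h2 ↦ hsub ⟨w, h1, h2, rfl⟩) hfst.symm
    have he_split : e = ((A u1 : V) + α u2) + (w + v2) := by rw [hsnd]; abel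
    exact he (he_split ▸ add_mem hA (add_mem (hVt hw) v2.2))
  · intro hns z
    obtain ⟨_, ⟨w, h1, h2, rfl⟩, hw⟩ := Set.not_subset.1 hns
    obtain ⟨u1, u2, v2, rfl⟩ := exists_decomposition_of_apply_sub_notMem hsum hcodim h1 h2 hw z
    exact ⟨_, ⟨u1, 0, zero_mem _, rfl⟩, _, ⟨u2, v2, rfl⟩, by simp⟩

/-- Lemma on transversality, linear algebra form: `V` finite dimensional real
vector space, `V1 + V2 = V`, `V2` of codimension 1, `Vt ⊆ V2` an arbitrary subspace,
`A : V1 → V1` and `α : V2 → V` linear. With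
`W1 = {(u1, A u1 + w) : u1 ∈ V1, w ∈ Vt}`, `W2 = {(u2, v2 + α u2) : u2, v2 ∈ V2}` and
`𝒜 = {A w - α w : w ∈ V1 ∩ V2}`, one has `W1 + W2 = V × V` iff `𝒜 ⊄ V2`. -/
theorem sum_eq_top_iff_not_subset
    {V : Type*} [AddCommGroup V] [Module ℝ V] [FiniteDimensional ℝ V]
    (V1 V2 Vt : Submodule ℝ V)
    (hsum : V1 ⊔ V2 = ⊤)
    (hcodim : Module.finrank ℝ (V ⧸ V2) = 1)
    (hVt : Vt ≤ V2)
    (A : V1 →ₗ[ℝ] V1) (α : V2 →ₗ[ℝ] V)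
    (W1 W2 : Set (V × V)) (𝒜 : Set V)
    (hW1 : W1 = {p | ∃ u1 : V1, ∃ w ∈ Vt, p = ((u1 : V), (A u1 : V) + w)})
    (hW2 : W2 = {p | ∃ u2 v2 : V2, p = ((u2 : V), (v2 : V) + α u2)})
    (h𝒜 : 𝒜 = {x | ∃ (w : V) (h1 : w ∈ V1) (h2 : w ∈ V2),
      x = (A ⟨w, h1⟩ : V) - α ⟨w, h2⟩}) :
    (∀ z : V × V, ∃ w1 ∈ W1, ∃ w2 ∈ W2, z = w1 + w2) ↔ ¬ (𝒜 ⊆ (V2 : Set V)) :=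
  sum_eq_top_iff_not_subset_general V1 V2 Vt hsum hcodim hVt A α W1 W2 𝒜 hW1 hW2 h𝒜
end

section
/- Let V be a finite dimensional real vector space, and let V1, V2 ⊆ V be subspaces with V1 + V2 = V and V2 of codimension 1 in V. Let v ∈ V2, let A : V1 → V1 and α : V2 → V be linear maps, and define W1 = {(u1, A(u1) + λ·v) : u1 ∈ V1, λ ∈ ℝ} ⊆ V × V, W2 = {(u2, v2 + α(u2)) : u2, v2 ∈ V2} ⊆ V × V, and 𝒜 = {A(w) − α(w) : w ∈ V1 ∩ V2} ⊆ V. Then for all z, z' ∈ V and any decomposition z = u1 + u2 with u1 ∈ V1 and u2 ∈ V2, the pair (z, z') belongs to W1 + W2 if and only if z' belongs to the affine subspace A(u1) + α(u2) + 𝒜 + V2 of V. -/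
/-!
Writing `z = a₁ + b₂` for the first coordinate of a point of `W1 + W2`, the second coordinate is
`A a₁ + α b₂` up to `V2`, because the line `ℝ • v` already lies in `V2`. Any two decompositions
`z = a₁ + b₂ = u₁ + u₂` differ by some `w ∈ V1 ∩ V2`, namely `a₁ = u₁ + w` and `b₂ = u₂ - w`,
which changes `A a₁ + α b₂` by exactly `A w - α w ∈ 𝒜`.
-/

namespace Submodule

variable {R V : Type*} [Ring R] [AddCommGroup V] [Module R V] {V1 V2 : Submodule R V}

theorem coe_add_coe_eq_iff {a₁ u₁ : V1} {b₂ u₂ : V2} :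
    (a₁ : V) + b₂ = u₁ + u₂ ↔
      ∃ (w : V) (h1 : w ∈ V1) (h2 : w ∈ V2), a₁ = u₁ + ⟨w, h1⟩ ∧ b₂ = u₂ - ⟨w, h2⟩ := by
  constructor
  · intro h
    have hw : (a₁ : V) - u₁ = u₂ - b₂ := by
      rw [sub_eq_sub_iff_add_eq_add, h, add_comm]
    have hw2 : (a₁ : V) - u₁ ∈ V2 := hw ▸ sub_mem u₂.2 b₂.2
    refine ⟨_, sub_mem a₁.2 u₁.2, hw2, ?_, ?_⟩ <;> ext
    · simp
    · simp [hw]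
  · rintro ⟨w, h1, h2, rfl, rfl⟩
    push_cast
    abel

theorem exists_add_mem_graph_add_line_iff {v : V} (hv : v ∈ V2) (f : V1 → V) (g : V2 → V)
    (z z' : V) :
    (∃ w1 ∈ {p : V × V | ∃ (u1 : V1) (l : R), p = ((u1 : V), f u1 + l • v)},
      ∃ w2 ∈ {p : V × V | ∃ u2 v2 : V2, p = ((u2 : V), (v2 : V) + g u2)}, (z, z') = w1 + w2) ↔
      ∃ (a₁ : V1) (b₂ : V2), (a₁ : V) + b₂ = z ∧ ∃ t ∈ V2, z' = f a₁ + g b₂ + t := by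
  constructor
  · rintro ⟨_, ⟨a₁, l, rfl⟩, _, ⟨b₂, c₂, rfl⟩, h⟩
    rw [Prod.mk_add_mk, Prod.mk.injEq] at h
    obtain ⟨hz, hz'⟩ := h
    refine ⟨a₁, b₂, hz.symm, l • v + c₂, add_mem (V2.smul_mem l hv) c₂.2, ?_⟩
    rw [hz']
    abel
  · rintro ⟨a₁, b₂, rfl, t, ht, rfl⟩
    refine ⟨_, ⟨a₁, 0, rfl⟩, _, ⟨b₂, ⟨t, ht⟩, rfl⟩, ?_⟩
    simp only [Prod.mk_add_mk, zero_smul, add_zero]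
    congr 1
    abel

end Submodule

theorem mem_sum_iff_mem_affine_subspace_general
    {V : Type*} [AddCommGroup V] [Module ℝ V]
    (V1 V2 : Submodule ℝ V)
    (v : V) (hv : v ∈ V2)
    (A : V1 →ₗ[ℝ] V1) (α : V2 →ₗ[ℝ] V)
    (W1 W2 : Set (V × V)) (𝒜 : Set V)
    (hW1 : W1 = {p | ∃ (u1 : V1) (l : ℝ), p = ((u1 : V), (A u1 : V) + l • v)})
    (hW2 : W2 = {p | ∃ u2 v2 : V2, p = ((u2 : V), (v2 : V) + α u2)})
    (h𝒜 : 𝒜 = {x | ∃ (w : V) (h1 : w ∈ V1) (h2 : w ∈ V2),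
      x = (A ⟨w, h1⟩ : V) - α ⟨w, h2⟩}) :
    ∀ (z z' : V) (u1 : V1) (u2 : V2), z = (u1 : V) + (u2 : V) →
      ((∃ w1 ∈ W1, ∃ w2 ∈ W2, (z, z') = w1 + w2) ↔
        ∃ a ∈ 𝒜, ∃ t ∈ V2, z' = (A u1 : V) + α u2 + a + t) := by
  rintro z z' u1 u2 rfl
  subst hW1 hW2 h𝒜
  rw [Submodule.exists_add_mem_graph_add_line_iff hv (fun u ↦ (A u : V)) α]
  simp only [Submodule.coe_add_coe_eq_iff]
  constructor
  · rintro ⟨_, _, ⟨w, h1, h2, rfl, rfl⟩, t, ht, rfl⟩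
    refine ⟨_, ⟨w, h1, h2, rfl⟩, t, ht, ?_⟩
    simp only [map_add, map_sub, Submodule.coe_add]
    abel
  · rintro ⟨_, ⟨w, h1, h2, rfl⟩, t, ht, rfl⟩
    refine ⟨_, _, ⟨w, h1, h2, rfl, rfl⟩, t, ht, ?_⟩
    simp only [map_add, map_sub, Submodule.coe_add]
    abel

/-- first part of Proposition on transversality, linear algebra form:
with `W1 = {(u1, A u1 + λ•v)}`, `W2 = {(u2, v2 + α u2)}`, `𝒜 = {A w - α w : w ∈ V1 ∩ V2}`,
for any `z, z'` and any decomposition `z = u1 + u2` with `u1 ∈ V1`, `u2 ∈ V2`, the pair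
`(z, z')` belongs to `W1 + W2` iff `z'` lies in the affine subspace
`A u1 + α u2 + 𝒜 + V2`. -/
theorem mem_sum_iff_mem_affine_subspace
    {V : Type*} [AddCommGroup V] [Module ℝ V] [FiniteDimensional ℝ V]
    (V1 V2 : Submodule ℝ V)
    (hsum : V1 ⊔ V2 = ⊤)
    (hcodim : Module.finrank ℝ (V ⧸ V2) = 1)
    (v : V) (hv : v ∈ V2)
    (A : V1 →ₗ[ℝ] V1) (α : V2 →ₗ[ℝ] V)
    (W1 W2 : Set (V × V)) (𝒜 : Set V)
    (hW1 : W1 = {p | ∃ (u1 : V1) (l : ℝ), p = ((u1 : V), (A u1 : V) + l • v)})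
    (hW2 : W2 = {p | ∃ u2 v2 : V2, p = ((u2 : V), (v2 : V) + α u2)})
    (h𝒜 : 𝒜 = {x | ∃ (w : V) (h1 : w ∈ V1) (h2 : w ∈ V2),
      x = (A ⟨w, h1⟩ : V) - α ⟨w, h2⟩}) :
    ∀ (z z' : V) (u1 : V1) (u2 : V2), z = (u1 : V) + (u2 : V) →
      ((∃ w1 ∈ W1, ∃ w2 ∈ W2, (z, z') = w1 + w2) ↔
        ∃ a ∈ 𝒜, ∃ t ∈ V2, z' = (A u1 : V) + α u2 + a + t) :=
  mem_sum_iff_mem_affine_subspace_general V1 V2 v hv A α W1 W2 𝒜 hW1 hW2 h𝒜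
end

section
/- Let V be a finite dimensional real vector space, and let V1, V2 ⊆ V be subspaces with V1 + V2 = V and V2 of codimension 1 in V. Let v ∈ V2, let A : V1 → V1 and α : V2 → V be linear maps, and define W1 = {(u1, A(u1) + λ·v) : u1 ∈ V1, λ ∈ ℝ} ⊆ V × V, W2 = {(u2, v2 + α(u2)) : u2, v2 ∈ V2} ⊆ V × V, and 𝒜 = {A(w) − α(w) : w ∈ V1 ∩ V2} ⊆ V. If 𝒜 ⊆ V2 (equivalently, if W1 + W2 ≠ V × V), then the subspace W1 + W2 has codimension 1 in V × V. -/
/-!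
Write `q : V → V ⧸ V2` for the quotient map. On `V1` and on `V2` the maps `q ∘ A` and `q ∘ α`
agree on `V1 ∩ V2` precisely because `𝒜 ⊆ V2`, so they glue (as `V1 + V2 = V`) to a linear map
`B : V → V ⧸ V2`. Then `W1 + W2` is the kernel of the surjection `(x, y) ↦ q y - B x` onto the
line `V ⧸ V2`.
-/

open Submodule LinearMap

theorem LinearMap.exists_extend_of_sup_eq_top {R M N : Type*} [Ring R] [AddCommGroup M]
    [Module R M] [AddCommGroup N] [Module R N] {p q : Submodule R M} (hpq : p ⊔ q = ⊤)
    (f : p →ₗ[R] N) (g : q →ₗ[R] N) (hfg : ∀ (x : p) (y : q), (x : M) = y → f x = g y) :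
    ∃ B : M →ₗ[R] N, (∀ x : p, B x = f x) ∧ ∀ y : q, B y = g y := by
  let h : M →ₗ.[R] N := LinearPMap.sup ⟨p, f⟩ ⟨q, g⟩ hfg
  refine ⟨h.toFun ∘ₗ (LinearEquiv.ofTop h.domain hpq).symm.toLinearMap, fun x => ?_, fun y => ?_⟩
  · exact ((LinearPMap.left_le_sup _ _ hfg).2 rfl).symm
  · exact ((LinearPMap.right_le_sup _ _ hfg).2 rfl).symm

section Transversality

variable {K V : Type*} [Ring K] [AddCommGroup V] [Module K V] {V1 V2 : Submodule K V}
  {v : V} {A : V1 →ₗ[K] V1} {α : V2 →ₗ[K] V} {B : V →ₗ[K] V ⧸ V2}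

theorem span_sup_span_le_ker (hv : v ∈ V2)
    (hB1 : ∀ u : V1, B u = V2.mkQ (A u)) (hB2 : ∀ u : V2, B u = V2.mkQ (α u)) :
    span K {p : V × V | ∃ (u1 : V1) (l : K), p = ((u1 : V), (A u1 : V) + l • v)} ⊔
      span K {p : V × V | ∃ u2 v2 : V2, p = ((u2 : V), (v2 : V) + α u2)} ≤
      ker (V2.mkQ ∘ₗ snd K V V - B ∘ₗ fst K V V) := by
  refine sup_le (span_le.2 ?_) (span_le.2 ?_)
  · rintro _ ⟨u1, l, rfl⟩
    simp [hB1, (Quotient.mk_eq_zero V2).2 hv]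
  · rintro _ ⟨u2, v2, rfl⟩
    simp [hB2, (Quotient.mk_eq_zero V2).2 v2.2]

theorem ker_le_span_sup_span (hsum : V1 ⊔ V2 = ⊤)
    (hB1 : ∀ u : V1, B u = V2.mkQ (A u)) (hB2 : ∀ u : V2, B u = V2.mkQ (α u)) :
    ker (V2.mkQ ∘ₗ snd K V V - B ∘ₗ fst K V V) ≤
      span K {p : V × V | ∃ (u1 : V1) (l : K), p = ((u1 : V), (A u1 : V) + l • v)} ⊔
        span K {p : V × V | ∃ u2 v2 : V2, p = ((u2 : V), (v2 : V) + α u2)} := by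
  rintro ⟨x, y⟩ hxy
  obtain ⟨x1, hx1, x2, hx2, rfl⟩ := mem_sup.1 (hsum ▸ mem_top : x ∈ V1 ⊔ V2)
  set a := (A ⟨x1, hx1⟩ : V)
  set b := α ⟨x2, hx2⟩
  have hrest : y - (a + b) ∈ V2 := by
    have hq : V2.mkQ y = V2.mkQ a + V2.mkQ b := by
      simpa [sub_eq_zero, hB1 ⟨x1, hx1⟩, hB2 ⟨x2, hx2⟩, a, b] using hxy
    rw [← Quotient.mk_eq_zero, Quotient.mk_sub, Quotient.mk_add]
    simpa [sub_eq_zero] using hq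
  have hdecomp : ((x1 + x2, y) : V × V) =
      (x1, a + (0 : K) • v) + (x2, (⟨y - (a + b), hrest⟩ : V2) + b) := by
    ext <;> simp only [Prod.fst_add, Prod.snd_add, zero_smul, add_zero]; abel
  rw [hdecomp]
  exact add_mem_sup (subset_span ⟨⟨x1, hx1⟩, 0, rfl⟩) (subset_span ⟨⟨x2, hx2⟩, _, rfl⟩)

end Transversality

theorem codim_one_of_not_transversal_general
    {V : Type*} [AddCommGroup V] [Module ℝ V]
    (V1 V2 : Submodule ℝ V)
    (hsum : V1 ⊔ V2 = ⊤)
    (hcodim : Module.finrank ℝ (V ⧸ V2) = 1)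
    (v : V) (hv : v ∈ V2)
    (A : V1 →ₗ[ℝ] V1) (α : V2 →ₗ[ℝ] V)
    (W1 W2 : Set (V × V)) (𝒜 : Set V)
    (hW1 : W1 = {p | ∃ (u1 : V1) (l : ℝ), p = ((u1 : V), (A u1 : V) + l • v)})
    (hW2 : W2 = {p | ∃ u2 v2 : V2, p = ((u2 : V), (v2 : V) + α u2)})
    (h𝒜 : 𝒜 = {x | ∃ (w : V) (h1 : w ∈ V1) (h2 : w ∈ V2),
      x = (A ⟨w, h1⟩ : V) - α ⟨w, h2⟩})
    (hsubset : 𝒜 ⊆ (V2 : Set V)) :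
    Module.finrank ℝ ((V × V) ⧸ (Submodule.span ℝ W1 ⊔ Submodule.span ℝ W2)) = 1 := by
  subst hW1 hW2 h𝒜
  have hagree : ∀ (x : V1) (y : V2), (x : V) = y →
      (V2.mkQ ∘ₗ V1.subtype ∘ₗ A) x = (V2.mkQ ∘ₗ α) y := by
    rintro ⟨x, hx1⟩ ⟨_, hx2⟩ rfl
    simpa [sub_eq_zero] using (Quotient.mk_eq_zero V2).2 (hsubset ⟨x, hx1, hx2, rfl⟩)
  obtain ⟨B, hB1, hB2⟩ := exists_extend_of_sup_eq_top hsum _ _ hagree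
  set f := V2.mkQ ∘ₗ snd ℝ V V - B ∘ₗ fst ℝ V V
  have hsurj : Function.Surjective f := fun z => by
    obtain ⟨y, rfl⟩ := V2.mkQ_surjective z
    exact ⟨(0, y), by simp [f]⟩
  have hker : span ℝ _ ⊔ span ℝ _ = ker f :=
    le_antisymm (span_sup_span_le_ker hv hB1 hB2) (ker_le_span_sup_span hsum hB1 hB2)
  rw [hker, (f.quotKerEquivOfSurjective hsurj).finrank_eq, hcodim]

/-- in the setting of the transversality lemma, if `𝒜 ⊆ V2`
(equivalently `W1 + W2 ≠ V × V`), then the subspace `W1 + W2` has codimension 1 in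
`V × V`. Here the subspace `W1 + W2` is realized as the span of `W1 ∪ W2` (which
coincides with the sum, since `W1` and `W2` are subspaces). -/
theorem codim_one_of_not_transversal
    {V : Type*} [AddCommGroup V] [Module ℝ V] [FiniteDimensional ℝ V]
    (V1 V2 : Submodule ℝ V)
    (hsum : V1 ⊔ V2 = ⊤)
    (hcodim : Module.finrank ℝ (V ⧸ V2) = 1)
    (v : V) (hv : v ∈ V2)
    (A : V1 →ₗ[ℝ] V1) (α : V2 →ₗ[ℝ] V)
    (W1 W2 : Set (V × V)) (𝒜 : Set V)
    (hW1 : W1 = {p | ∃ (u1 : V1) (l : ℝ), p = ((u1 : V), (A u1 : V) + l • v)})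
    (hW2 : W2 = {p | ∃ u2 v2 : V2, p = ((u2 : V), (v2 : V) + α u2)})
    (h𝒜 : 𝒜 = {x | ∃ (w : V) (h1 : w ∈ V1) (h2 : w ∈ V2),
      x = (A ⟨w, h1⟩ : V) - α ⟨w, h2⟩})
    (hsubset : 𝒜 ⊆ (V2 : Set V)) :
    Module.finrank ℝ ((V × V) ⧸ (Submodule.span ℝ W1 ⊔ Submodule.span ℝ W2)) = 1 :=
  codim_one_of_not_transversal_general V1 V2 hsum hcodim v hv A α W1 W2 𝒜 hW1 hW2 h𝒜 hsubset
end

section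
/- Let x : [a,b] → ℝ^n be an H^1 curve, let φ : ℝ^n → ℝ be a differentiable function with φ(x(s)) ≤ 0 for all s ∈ [a,b], and let K0 > 0 be such that ‖∇φ(x(s))‖ ≤ K0 for all s ∈ [a,b]. Assume φ(x(a)) = 0 and φ(x(b)) = 0, and let δ0 > 0. If (b−a)·∫_a^b ‖ẋ(σ)‖² dσ ≤ δ0²/K0², then φ(x(s)) ≥ −δ0 for all s ∈ [a,b]. -/
/-!
Along the curve, `t ↦ φ (x t)` can drop from `φ (x a) = 0` by at most
`K0 * ∫_a^s ‖ẋ‖ ≤ K0 * ∫_a^b ‖ẋ‖`, since `‖∇φ‖ ≤ K0` on the curve and the curve has length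
`∫ ‖ẋ‖`. By Cauchy–Schwarz, `(∫_a^b ‖ẋ‖)² ≤ (b - a) ∫_a^b ‖ẋ‖² ≤ δ0² / K0²`.
-/

open MeasureTheory Set Filter Topology

theorem sub_le_sub_of_eventually_nhdsGT_sub_le {f g : ℝ → ℝ} {a b : ℝ} (hab : a ≤ b)
    (hf : ContinuousOn f (Icc a b)) (hg : ContinuousOn g (Icc a b))
    (hloc : ∀ t ∈ Ico a b, ∀ᶠ u in 𝓝[>] t, f u - f t ≤ g u - g t) :
    f b - f a ≤ g b - g a := by
  let S := {t | f t - g t ≤ f a - g a}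
  have hS : IsClosed (S ∩ Icc a b) := by
    rw [inter_comm]
    exact (hf.sub hg).preimage_isClosed_of_isClosed isClosed_Icc isClosed_Iic
  have hsub : Icc a b ⊆ S := by
    refine hS.Icc_subset_of_forall_mem_nhdsWithin (show f a - g a ≤ f a - g a from le_rfl)
      fun t ⟨htS, ht⟩ => ?_
    filter_upwards [hloc t ht] with u hu
    show f u - g u ≤ f a - g a
    linarith [show f t - g t ≤ f a - g a from htS]
  linarith [show f b - g b ≤ f a - g a from hsub (right_mem_Icc.2 hab)]

section Curves

variable {E F : Type*} [NormedAddCommGroup E] [NormedSpace ℝ E]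
  [NormedAddCommGroup F] [NormedSpace ℝ F]

theorem HasFDerivAt.eventually_norm_sub_le {ψ : E → F} {L : E →L[ℝ] F} {p : E}
    (h : HasFDerivAt ψ L p) {ε : ℝ} (hε : 0 < ε) :
    ∀ᶠ y in 𝓝 p, ‖ψ y - ψ p‖ ≤ (‖L‖ + ε) * ‖y - p‖ := by
  filter_upwards [h.isLittleO.def hε] with y hy
  calc ‖ψ y - ψ p‖ ≤ ‖ψ y - ψ p - L (y - p)‖ + ‖L (y - p)‖ := by
        simpa using norm_add_le (ψ y - ψ p - L (y - p)) (L (y - p))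
    _ ≤ ε * ‖y - p‖ + ‖L‖ * ‖y - p‖ := add_le_add hy (L.le_opNorm _)
    _ = (‖L‖ + ε) * ‖y - p‖ := by ring

/-- The derivative of `ψ` is controlled only on the curve, not on a neighbourhood of it, so there
is no Lipschitz estimate to integrate; instead the bound with slack `ε` is propagated from `a` by
continuous induction, with `G` playing the role of arc length. -/
theorem norm_image_sub_le_of_norm_fderiv_le_along {ψ : E → F} {x : ℝ → E} {G : ℝ → ℝ}
    {a b K : ℝ} (hab : a ≤ b) (hx : ContinuousOn x (Icc a b)) (hG : ContinuousOn G (Icc a b))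
    (hxG : ∀ t ∈ Icc a b, ∀ u ∈ Icc t b, ‖x u - x t‖ ≤ G u - G t)
    (hψ : ∀ t ∈ Icc a b, DifferentiableAt ℝ ψ (x t))
    (hK : ∀ t ∈ Icc a b, ‖fderiv ℝ ψ (x t)‖ ≤ K) :
    ‖ψ (x b) - ψ (x a)‖ ≤ K * (G b - G a) := by
  have hψx : ContinuousOn (fun t => ψ (x t)) (Icc a b) := fun t ht =>
    (hψ t ht).continuousAt.comp_continuousWithinAt (hx t ht)
  have hε : ∀ ε > 0, ‖ψ (x b) - ψ (x a)‖ ≤ (K + ε) * (G b - G a) := by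
    intro ε hε
    have key := sub_le_sub_of_eventually_nhdsGT_sub_le hab
      (f := fun t => ‖ψ (x t) - ψ (x a)‖) (g := fun t => (K + ε) * G t)
      (hψx.sub continuousOn_const).norm (continuousOn_const.mul hG) fun t ht => ?_
    · simpa [mul_sub] using key
    have ht' : t ∈ Icc a b := Ico_subset_Icc_self ht
    have hxt : Tendsto x (𝓝[>] t) (𝓝 (x t)) := by
      rw [← nhdsWithin_Ioc_eq_nhdsGT ht.2]
      exact (hx t ht').tendsto.mono_left
        (nhdsWithin_mono _ fun u hu => ⟨ht.1.trans hu.1.le, hu.2⟩)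
    filter_upwards [hxt.eventually ((hψ t ht').hasFDerivAt.eventually_norm_sub_le hε),
      Ioc_mem_nhdsGT ht.2] with u hu hub
    have hKε : 0 ≤ K + ε := by linarith [(norm_nonneg _).trans (hK t ht')]
    calc ‖ψ (x u) - ψ (x a)‖ - ‖ψ (x t) - ψ (x a)‖ ≤ ‖ψ (x u) - ψ (x t)‖ := by
          simpa using norm_sub_norm_le (ψ (x u) - ψ (x a)) (ψ (x t) - ψ (x a))
      _ ≤ (‖fderiv ℝ ψ (x t)‖ + ε) * ‖x u - x t‖ := hu
      _ ≤ (K + ε) * (G u - G t) := by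
          gcongr
          · exact hK t ht'
          · exact hxG t ht' u ⟨hub.1.le, hub.2⟩
      _ = (K + ε) * G u - (K + ε) * G t := mul_sub _ _ _
  have hlim : Tendsto (fun ε => (K + ε) * (G b - G a)) (𝓝[>] 0) (𝓝 (K * (G b - G a))) := by
    have : Continuous fun ε : ℝ => (K + ε) * (G b - G a) := by fun_prop
    simpa using (this.tendsto 0).mono_left nhdsWithin_le_nhds
  exact ge_of_tendsto hlim (eventually_nhdsWithin_of_forall hε)

theorem norm_image_sub_le_of_eq_add_integral {ψ : E → F} {x x' : ℝ → E} {a b K : ℝ}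
    (hab : a ≤ b) (hint : IntegrableOn x' (Icc a b))
    (hFTC : ∀ t ∈ Icc a b, x t = x a + ∫ s in a..t, x' s)
    (hψ : ∀ t ∈ Icc a b, DifferentiableAt ℝ ψ (x t))
    (hK : ∀ t ∈ Icc a b, ‖fderiv ℝ ψ (x t)‖ ≤ K) :
    ‖ψ (x b) - ψ (x a)‖ ≤ K * ∫ s in a..b, ‖x' s‖ := by
  have huIcc : uIcc a b = Icc a b := uIcc_of_le hab
  have hii : IntervalIntegrable x' volume a b := (huIcc ▸ hint).intervalIntegrable
  have hii' : ∀ t ∈ Icc a b, IntervalIntegrable x' volume a t := fun t ht =>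
    hii.mono_set (uIcc_subset_uIcc_left (huIcc ▸ ht))
  have hx : ContinuousOn x (Icc a b) := by
    refine (continuousOn_const.add ?_).congr hFTC
    exact huIcc ▸ intervalIntegral.continuousOn_primitive_interval (huIcc ▸ hint)
  have hG : ContinuousOn (fun t => ∫ s in a..t, ‖x' s‖) (Icc a b) :=
    huIcc ▸ intervalIntegral.continuousOn_primitive_interval (huIcc ▸ hint.norm)
  have hxG : ∀ t ∈ Icc a b, ∀ u ∈ Icc t b,
      ‖x u - x t‖ ≤ (∫ s in a..u, ‖x' s‖) - ∫ s in a..t, ‖x' s‖ := by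
    intro t ht u hu
    have hu' : u ∈ Icc a b := ⟨ht.1.trans hu.1, hu.2⟩
    rw [hFTC u hu', hFTC t ht, add_sub_add_left_eq_sub,
      intervalIntegral.integral_interval_sub_left (hii' u hu') (hii' t ht),
      intervalIntegral.integral_interval_sub_left (hii' u hu').norm (hii' t ht).norm]
    exact intervalIntegral.norm_integral_le_integral_norm hu.1
  simpa using norm_image_sub_le_of_norm_fderiv_le_along hab hx hG hxG hψ hK

end Curves

theorem sq_integral_le_measureReal_univ_mul_integral_sq {α : Type*} [MeasurableSpace α]
    {μ : Measure α} [IsFiniteMeasure μ] {f : α → ℝ} (hf : MemLp f 2 μ) :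
    (∫ a, f a ∂μ) ^ 2 ≤ μ.real univ * ∫ a, f a ^ 2 ∂μ := by
  have hfi : Integrable f μ := hf.integrable one_le_two
  have hquad : ∀ c : ℝ,
      0 ≤ μ.real univ * (c * c) + (-2 * ∫ a, f a ∂μ) * c + ∫ a, f a ^ 2 ∂μ := by
    intro c
    have hexp : ∫ a, (c - f a) ^ 2 ∂μ
        = μ.real univ * (c * c) + (-2 * ∫ a, f a ∂μ) * c + ∫ a, f a ^ 2 ∂μ := by
      have hlin : Integrable (fun a => c ^ 2 - 2 * c * f a) μ :=
        (integrable_const _).sub (hfi.const_mul _)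
      simp only [sub_sq]
      rw [integral_add hlin hf.integrable_sq,
        integral_sub (integrable_const _) (hfi.const_mul _), integral_const, integral_const_mul,
        smul_eq_mul]
      ring
    exact hexp ▸ integral_nonneg fun a => sq_nonneg _
  have := discrim_le_zero hquad
  rw [discrim] at this
  linarith

theorem sq_intervalIntegral_le {f : ℝ → ℝ} {a b : ℝ} (hab : a ≤ b)
    (hf : MemLp f 2 (volume.restrict (Ioc a b))) :
    (∫ t in a..b, f t) ^ 2 ≤ (b - a) * ∫ t in a..b, f t ^ 2 := by
  simpa [intervalIntegral.integral_of_le hab, measureReal_def, hab]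
    using sq_integral_le_measureReal_univ_mul_integral_sq hf

theorem phi_ge_neg_delta_of_small_energy_general
    {n : ℕ} (a b : ℝ)
    (x x' : ℝ → EuclideanSpace ℝ (Fin n))
    (hL2 : MemLp x' 2 (volume.restrict (Icc a b)))
    (hFTC : ∀ t ∈ Icc a b, x t = x a + ∫ s in a..t, x' s)
    (φ : EuclideanSpace ℝ (Fin n) → ℝ) (hφ : Differentiable ℝ φ)
    (K0 : ℝ) (hK0 : 0 < K0)
    (hgrad : ∀ s ∈ Icc a b, ‖gradient φ (x s)‖ ≤ K0)
    (ha : φ (x a) = 0)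
    (δ0 : ℝ) (hδ0 : 0 < δ0)
    (hsmall : (b - a) * (∫ σ in a..b, ‖x' σ‖ ^ 2) ≤ δ0 ^ 2 / K0 ^ 2) :
    ∀ s ∈ Icc a b, -δ0 ≤ φ (x s) := by
  intro s hs
  have hab : a ≤ b := hs.1.trans hs.2
  have hint : IntegrableOn x' (Icc a b) := hL2.integrable one_le_two
  have hsub : Icc a s ⊆ Icc a b := Icc_subset_Icc_right hs.2
  have hdrop : ‖φ (x s) - φ (x a)‖ ≤ K0 * ∫ t in a..s, ‖x' t‖ := by
    refine norm_image_sub_le_of_eq_add_integral hs.1 (hint.mono_set hsub)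
      (fun t ht => hFTC t (hsub ht)) (fun t _ => hφ _) fun t ht => ?_
    rw [← toDual_gradient, LinearIsometryEquiv.norm_map]
    exact hgrad t (hsub ht)
  rw [ha, sub_zero, Real.norm_eq_abs] at hdrop
  have hmono : ∫ t in a..s, ‖x' t‖ ≤ ∫ t in a..b, ‖x' t‖ :=
    intervalIntegral.integral_mono_interval le_rfl hs.1 hs.2
      (Eventually.of_forall fun _ => norm_nonneg _)
      ((intervalIntegrable_iff_integrableOn_Icc_of_le hab).2 hint.norm)
  have hCS := sq_intervalIntegral_le hab
    (hL2.norm.mono_measure (Measure.restrict_mono Ioc_subset_Icc_self le_rfl))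
  have hbound : K0 * ∫ t in a..b, ‖x' t‖ ≤ δ0 := by
    refine (le_abs_self _).trans (abs_le_of_sq_le_sq ?_ hδ0.le)
    calc (K0 * ∫ t in a..b, ‖x' t‖) ^ 2 ≤ K0 ^ 2 * (δ0 ^ 2 / K0 ^ 2) := by
          rw [mul_pow]; gcongr; exact hCS.trans hsmall
      _ = δ0 ^ 2 := by field_simp
  linarith [neg_abs_le (φ (x s)), mul_le_mul_of_nonneg_left hmono hK0.le]

/-- Corollary, "small strip": for an `H¹` curve `x : [a,b] → ℝⁿ` (encoded
by the FTC representation with square-integrable a.e. derivative `x'`) with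
`φ(x(s)) ≤ 0` on `[a,b]`, `‖∇φ(x(s))‖ ≤ K0`, `φ(x(a)) = φ(x(b)) = 0`: if
`(b-a) ∫_a^b ‖ẋ‖² ≤ δ0²/K0²` then `φ(x(s)) ≥ -δ0` on `[a,b]`. -/
theorem phi_ge_neg_delta_of_small_energy
    {n : ℕ} (a b : ℝ) (hab : a ≤ b)
    (x x' : ℝ → EuclideanSpace ℝ (Fin n))
    (hL2 : MemLp x' 2 (volume.restrict (Icc a b)))
    (hFTC : ∀ t ∈ Icc a b, x t = x a + ∫ s in a..t, x' s)
    (φ : EuclideanSpace ℝ (Fin n) → ℝ) (hφ : Differentiable ℝ φ)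
    (hnonpos : ∀ s ∈ Icc a b, φ (x s) ≤ 0)
    (K0 : ℝ) (hK0 : 0 < K0)
    (hgrad : ∀ s ∈ Icc a b, ‖gradient φ (x s)‖ ≤ K0)
    (ha : φ (x a) = 0) (hb : φ (x b) = 0)
    (δ0 : ℝ) (hδ0 : 0 < δ0)
    (hsmall : (b - a) * (∫ σ in a..b, ‖x' σ‖ ^ 2) ≤ δ0 ^ 2 / K0 ^ 2) :
    ∀ s ∈ Icc a b, -δ0 ≤ φ (x s) :=
  phi_ge_neg_delta_of_small_energy_general a b x x' hL2 hFTC φ hφ K0 hK0 hgrad ha δ0 hδ0 hsmall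
end
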